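/- Let $A \in \mathbb{C}^{p \times p}$ have all eigenvalues either equal to zero or with strictly negative real part, and suppose every Jordan block of $A$ corresponding to the eigenvalue zero is of size one (i.e., $\ker A = \ker A^2$). Then there exists $M \geq 0$ such that for all $z \in \mathbb{C}_+$ (the open right half-plane), $I - \tfrac{1}{z} A$ is invertible and $\|(I - \tfrac{1}{z} A)^{-1}\| \leq M$. -/

import Mathlib

/-!
Put `w = z⁻¹`, which ranges over the closed right half-plane. There `1 - w • A` is invertible,
since otherwise `w⁻¹` would be a nonzero eigenvalue of `A` with nonnegative real part.
Semisimplicity of `0` gives `range A = range A²`, hence some `X` with `A² X = A`. Then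
`P = 1 - A X` satisfies `A P = 0` and `A X = 1 - P`, and the inverse `B` of `1 - w • A` satisfies
`B = P + w⁻¹ (B - 1) X`, which bounds `‖B‖` by `2 ‖P‖ + ‖1‖` once `|w| ≥ 2 ‖X‖`. On the
remaining compact part of the half-plane, `B` is bounded by continuity.
-/

attribute [local instance] Matrix.linftyOpNormedAddCommGroup Matrix.linftyOpNormedRing
  Matrix.linftyOpNormedSpace Matrix.linftyOpNormedAlgebra

section Algebra

variable {𝕜 R : Type*} [Field 𝕜] [Ring R] [Algebra 𝕜 R]

theorem isUnit_one_sub_smul_of_inv_notMem_spectrum {a : R} {w : 𝕜} (hw : w ≠ 0)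
    (h : w⁻¹ ∉ spectrum 𝕜 a) : IsUnit (1 - w • a) := by
  have hfactor : 1 - w • a = algebraMap 𝕜 R w * (algebraMap 𝕜 R w⁻¹ - a) := by
    rw [mul_sub, ← map_mul, mul_inv_cancel₀ hw, map_one, ← Algebra.smul_def]
  rw [hfactor]
  exact ((isUnit_iff_ne_zero.mpr hw).map _).mul (spectrum.notMem_iff.mp h)

theorem eq_add_smul_of_mul_one_sub_smul_eq_one {a x b : R} {w : 𝕜} (hax : a * a * x = a)
    (hw : w ≠ 0) (hb : b * (1 - w • a) = 1) : b = (1 - a * x) + w⁻¹ • ((b - 1) * x) := by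
  have hba : b * a = w⁻¹ • (b - 1) := by
    rw [← hb, mul_sub, mul_one, sub_sub_cancel, mul_smul_comm, smul_smul, inv_mul_cancel₀ hw,
      one_smul]
  have hfix : (1 - w • a) * (1 - a * x) = 1 - a * x := by
    rw [sub_mul, one_mul, smul_mul_assoc, mul_sub, mul_one, ← mul_assoc, hax, sub_self,
      smul_zero, sub_zero]
  have hbfix : b * (1 - a * x) = 1 - a * x := by
    simpa only [← mul_assoc, hb, one_mul] using (congrArg (b * ·) hfix).symm
  calc b = b * (1 - a * x) + b * a * x := by rw [mul_sub, mul_one, mul_assoc, sub_add_cancel]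
    _ = (1 - a * x) + w⁻¹ • ((b - 1) * x) := by rw [hbfix, hba, smul_mul_assoc]

end Algebra

theorem norm_le_of_mul_one_sub_smul_eq_one {𝕜 R : Type*} [NormedField 𝕜] [NormedRing R]
    [NormedAlgebra 𝕜 R] {a x b : R} {w : 𝕜} (hax : a * a * x = a) (hw : w ≠ 0)
    (hb : b * (1 - w • a) = 1) (hxw : 2 * ‖x‖ ≤ ‖w‖) :
    ‖b‖ ≤ 2 * ‖1 - a * x‖ + ‖(1 : R)‖ := by
  have hwpos : 0 < ‖w‖ := norm_pos_iff.mpr hw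
  have key : ‖b‖ ≤ ‖1 - a * x‖ + (‖b‖ + ‖(1 : R)‖) * (‖x‖ / ‖w‖) :=
    calc ‖b‖ = ‖(1 - a * x) + w⁻¹ • ((b - 1) * x)‖ := by
          rw [← eq_add_smul_of_mul_one_sub_smul_eq_one hax hw hb]
      _ ≤ ‖1 - a * x‖ + ‖w‖⁻¹ * (‖b - 1‖ * ‖x‖) := by
          grw [norm_add_le, norm_smul, norm_inv, norm_mul_le]
      _ ≤ ‖1 - a * x‖ + (‖b‖ + ‖(1 : R)‖) * (‖x‖ / ‖w‖) := by
          grw [norm_sub_le b 1]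
          exact le_of_eq (by ring)
  have hratio : ‖x‖ / ‖w‖ ≤ 1 / 2 := by
    rw [div_le_div_iff₀ hwpos two_pos]; linarith
  nlinarith [norm_nonneg b, norm_nonneg (1 : R)]

theorem exists_norm_le_of_continuousOn_of_norm_le_of_lt_norm {α E : Type*}
    [SeminormedAddCommGroup α] [ProperSpace α] [SeminormedAddCommGroup E] {f : α → E}
    {S : Set α} (hS : IsClosed S) (hf : ContinuousOn f S) {r C : ℝ}
    (hC : ∀ w ∈ S, r < ‖w‖ → ‖f w‖ ≤ C) : ∃ M, ∀ w ∈ S, ‖f w‖ ≤ M := by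
  have hK : IsCompact (Metric.closedBall 0 r ∩ S) := (isCompact_closedBall 0 r).inter_right hS
  obtain ⟨M, hM⟩ := hK.exists_bound_of_continuousOn (hf.mono Set.inter_subset_right)
  refine ⟨max M C, fun w hw => ?_⟩
  by_cases hwr : ‖w‖ ≤ r
  · exact (hM w ⟨by simpa using hwr, hw⟩).trans (le_max_left _ _)
  · exact (hC w hw (not_le.mp hwr)).trans (le_max_right _ _)

theorem Complex.inv_re_nonneg {z : ℂ} (hz : 0 ≤ z.re) : 0 ≤ z⁻¹.re := by
  rw [Complex.inv_re]; exact div_nonneg hz (Complex.normSq_nonneg z)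

section HalfPlane

variable {R : Type*} [NormedRing R] [NormedAlgebra ℂ R] {a : R}

theorem isUnit_one_sub_smul_of_re_nonneg (hspec : ∀ μ ∈ spectrum ℂ a, μ = 0 ∨ μ.re < 0)
    {w : ℂ} (hw : 0 ≤ w.re) : IsUnit (1 - w • a) := by
  rcases eq_or_ne w 0 with rfl | hw0
  · simp
  refine isUnit_one_sub_smul_of_inv_notMem_spectrum hw0 fun hmem => ?_
  rcases hspec _ hmem with h | h
  · exact hw0 (inv_eq_zero.mp h)
  · linarith [Complex.inv_re_nonneg hw]

theorem exists_norm_inverse_one_sub_smul_le [CompleteSpace R]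
    (hspec : ∀ μ ∈ spectrum ℂ a, μ = 0 ∨ μ.re < 0) {x : R} (hax : a * a * x = a) :
    ∃ M, ∀ w : ℂ, 0 ≤ w.re → ‖Ring.inverse (1 - w • a)‖ ≤ M := by
  have hunit {w : ℂ} (hw : 0 ≤ w.re) := isUnit_one_sub_smul_of_re_nonneg hspec hw
  have hcont : ContinuousOn (fun w : ℂ => Ring.inverse (1 - w • a)) {w | 0 ≤ w.re} :=
    fun w hw => by
      have hinv := NormedRing.inverse_continuousAt (hunit hw).unit
      rw [IsUnit.unit_spec] at hinv
      exact (hinv.comp (f := fun w : ℂ => 1 - w • a) (by fun_prop)).continuousWithinAt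
  exact exists_norm_le_of_continuousOn_of_norm_le_of_lt_norm
    (isClosed_le continuous_const Complex.continuous_re) hcont
    fun w hw hlt => norm_le_of_mul_one_sub_smul_eq_one hax
      (norm_pos_iff.mp ((by positivity : 0 ≤ 2 * ‖x‖).trans_lt hlt))
      (Ring.inverse_mul_cancel _ (hunit hw)) hlt.le

end HalfPlane

section Semisimple

variable {K V : Type*} [Field K] [AddCommGroup V] [Module K V] [FiniteDimensional K V]

theorem Module.End.range_mul_self_eq_range {f : Module.End K V}
    (h : LinearMap.ker (f * f) = LinearMap.ker f) :
    LinearMap.range (f * f) = LinearMap.range f := by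
  refine Submodule.eq_of_le_of_finrank_eq (LinearMap.range_comp_le_range f f) ?_
  have h1 := LinearMap.finrank_range_add_finrank_ker (f * f)
  have h2 := LinearMap.finrank_range_add_finrank_ker f
  rw [h] at h1
  omega

theorem Module.End.exists_mul_self_mul_eq_self {f : Module.End K V}
    (h : LinearMap.ker (f * f) = LinearMap.ker f) : ∃ g : Module.End K V, f * f * g = f := by
  have hle : LinearMap.range f ≤ LinearMap.range (f * f) := (range_mul_self_eq_range h).ge
  obtain ⟨g, hg⟩ := Module.projective_lifting_property (f * f).rangeRestrict
    (f.codRestrict _ fun v => hle (LinearMap.mem_range_self f v))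
    (f * f).surjective_rangeRestrict
  exact ⟨g, LinearMap.ext fun v => congrArg Subtype.val (LinearMap.congr_fun hg v)⟩

theorem Matrix.exists_mul_self_mul_eq_self {n : Type*} [Fintype n] [DecidableEq n]
    {A : Matrix n n K} (h : LinearMap.ker A.mulVecLin = LinearMap.ker (A * A).mulVecLin) :
    ∃ X : Matrix n n K, A * A * X = A := by
  obtain ⟨g, hg⟩ := Module.End.exists_mul_self_mul_eq_self (f := Matrix.toLinAlgEquiv' A)
    (by rw [← map_mul]; exact h.symm)
  exact ⟨Matrix.toLinAlgEquiv'.symm g, Matrix.toLinAlgEquiv'.injective (by simpa using hg)⟩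

end Semisimple

/-- If every eigenvalue of `A` is zero or has strictly negative real part, and the zero
eigenvalue is semisimple (`ker A = ker A²`), then `(I - z⁻¹ A)⁻¹` exists and is uniformly
bounded for `z` in the open right half-plane. -/
theorem inv_one_sub_smul_uniform_bound (p : ℕ) (A : Matrix (Fin p) (Fin p) ℂ)
    (hspec : ∀ μ ∈ spectrum ℂ A, μ = 0 ∨ μ.re < 0)
    (hsemi : LinearMap.ker A.mulVecLin = LinearMap.ker (A * A).mulVecLin) :
    ∃ M : ℝ, 0 ≤ M ∧ ∀ z : ℂ, 0 < z.re →
      IsUnit ((1 : Matrix (Fin p) (Fin p) ℂ) - z⁻¹ • A) ∧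
      ‖((1 : Matrix (Fin p) (Fin p) ℂ) - z⁻¹ • A)⁻¹‖ ≤ M := by
  obtain ⟨X, hX⟩ := Matrix.exists_mul_self_mul_eq_self hsemi
  obtain ⟨M, hM⟩ := exists_norm_inverse_one_sub_smul_le hspec hX
  refine ⟨max M 0, le_max_right _ _, fun z hz => ?_⟩
  have hw : 0 ≤ z⁻¹.re := Complex.inv_re_nonneg hz.le
  refine ⟨isUnit_one_sub_smul_of_re_nonneg hspec hw, ?_⟩
  rw [Matrix.nonsing_inv_eq_ringInverse]
  exact (hM _ hw).trans (le_max_left _ _)
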